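/- Fix a positive integer l, let a_r be the coefficient of x^r in (x²+x+1)^{l-1}(2x+1)(x+2)(x-1), and define the polynomial P_l(e,f) := Σ_{r=0}^{2l+1} a_r (e)_r (−f)_{2l+1−r}, where (a)_k is the rising factorial. Then P_l(e, e+2l−f) = −P_l(e, f) as polynomials in e and f. -/

import Mathlib

/-! Put `g = e + 2l - f`. The reflection `(-g)_n = (-1)^n (g - n + 1)_n` followed by Chu–Vandermonde
expands `(-g)_{2l+1-r}` into products `(e + r)_s (-f)_{2l+1-r-s}`, and `(e)_r (e + r)_s = (e)_{r+s}`.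
Collecting the coefficient of `(e)_m (-f)_{2l+1-m}` gives `P_l(e, g) = -Σ_m b_m (e)_m (-f)_{2l+1-m}`
with `b_m = Σ_{r ≤ m} C(2l+1-r, m-r) (-1)^r a_r`, the `m`-th coefficient of
`(1 + x)^{2l+1} A(-x / (1 + x))`. The involution `x ↦ -x / (1 + x)` fixes `x² + x + 1` and, after
clearing denominators, sends `(2x + 1)(x + 2)(x - 1)` to `(1 - x)(x + 2)(-(2x + 1))`, so `b_m = a_m`. -/

open Finset Polynomial

noncomputable section

/-- rising factorial -/
def rf {R : Type*} [CommRing R] (a : R) (k : ℕ) : R := ∏ i ∈ Finset.range k, (a + i)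

/-- the polynomial `(x²+x+1)^{l-1}(2x+1)(x+2)(x-1)` -/
def APoly (l : ℕ) : Polynomial ℚ :=
  (X ^ 2 + X + 1) ^ (l - 1) * (2 * X + 1) * (X + 2) * (X - 1)

/-- `P_l(e,f) = Σ_r a_r (e)_r (−f)_{2l+1−r}` -/
def PP (l : ℕ) {K : Type*} [Field K] (e f : K) : K :=
  ∑ r ∈ Finset.range (2 * l + 2), ((APoly l).coeff r : K) * rf e r * rf (-f) (2 * l + 1 - r)

section

variable {R : Type*} [CommRing R]

lemma rf_succ (a : R) (n : ℕ) : rf a (n + 1) = rf a n * (a + n) :=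
  prod_range_succ _ _

lemma rf_add (a : R) (m n : ℕ) : rf a (m + n) = rf a m * rf (a + m) n := by
  simp only [rf, prod_range_add, Nat.cast_add, add_assoc]

lemma rf_neg (a : R) (n : ℕ) : rf (-a) n = (-1) ^ n * rf (a - n + 1) n := by
  rw [rf, rf, ← prod_range_reflect (fun i : ℕ => a - n + 1 + i), ← card_range n, ← prod_const,
    card_range, ← prod_mul_distrib]
  refine prod_congr rfl fun i hi => ?_
  rw [Nat.cast_sub (by simp at hi; omega), Nat.cast_sub (by simp at hi; omega)]
  push_cast
  ring

lemma rf_add_eq_sum_antidiagonal (x y : R) (N : ℕ) :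
    rf (x + y) N = ∑ ij ∈ antidiagonal N, (N.choose ij.1 : R) * (rf x ij.1 * rf y ij.2) := by
  induction N with
  | zero => simp [rf]
  | succ N ih =>
    rw [sum_antidiagonal_choose_succ_mul (fun i j => rf x i * rf y j), rf_succ, ih, sum_mul,
      ← sum_add_distrib]
    refine sum_congr rfl fun ij hij => ?_
    rw [HasAntidiagonal.mem_antidiagonal] at hij
    rw [Nat.choose_symm_of_eq_add hij.symm, rf_succ, rf_succ, ← hij]
    push_cast
    ring

lemma rf_add_eq_sum_choose (x y : R) (N : ℕ) :
    rf (x + y) N = ∑ s ∈ range (N + 1), (N.choose s : R) * rf x s * rf y (N - s) := by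
  rw [rf_add_eq_sum_antidiagonal, Nat.sum_antidiagonal_eq_sum_range_succ
    (fun i j => (N.choose i : R) * (rf x i * rf y j))]
  simp only [mul_assoc]

/-- `(1 + X) ^ N * p (-X / (1 + X))`, computed through the degree-`N` homogenization of `p`. -/
def twist (N : ℕ) (p : R[X]) : R[X] := MvPolynomial.aeval ![-X, 1 + X] (p.homogenize N)

lemma twist_mul {p q : R[X]} {m n : ℕ} (hp : p.natDegree ≤ m) (hq : q.natDegree ≤ n) :
    twist (m + n) (p * q) = twist m p * twist n q := by
  rw [twist, homogenize_mul p q hp hq, map_mul, twist, twist]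

lemma twist_pow {p : R[X]} {n : ℕ} (hp : p.natDegree ≤ n) (k : ℕ) :
    twist (k * n) (p ^ k) = twist n p ^ k := by
  induction k with
  | zero => simp [twist]
  | succ k ih =>
    rw [Nat.succ_mul, pow_succ, twist_mul (natDegree_pow_le_of_le k hp) hp, ih, pow_succ]

lemma twist_eq_sum (N : ℕ) (p : R[X]) :
    twist N p = ∑ r ∈ range (N + 1), C (p.coeff r) * (-X) ^ r * (1 + X) ^ (N - r) := by
  rw [twist, homogenize, map_sum, Nat.sum_antidiagonal_eq_sum_range_succ_mk]
  refine sum_congr rfl fun r _ => ?_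
  simp [MvPolynomial.aeval_monomial, Finsupp.prod_fintype, mul_assoc]

lemma coeff_twist {N m : ℕ} (hm : m ≤ N) (p : R[X]) :
    (twist N p).coeff m =
      ∑ r ∈ range (m + 1), p.coeff r * (-1) ^ r * ((N - r).choose (m - r) : R) := by
  have hterm : ∀ r, (C (p.coeff r) * (-X) ^ r * (1 + X) ^ (N - r)).coeff m =
      if r ≤ m then p.coeff r * (-1) ^ r * ((N - r).choose (m - r) : R) else 0 := by
    intro r
    rw [neg_pow, show C (p.coeff r) * ((-1) ^ r * X ^ r) * (1 + X) ^ (N - r)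
        = C (p.coeff r * (-1) ^ r) * ((1 + X) ^ (N - r) * X ^ r) by simp; ring,
      coeff_C_mul, coeff_mul_X_pow', coeff_one_add_X_pow, mul_ite, mul_zero]
  rw [twist_eq_sum, finsetSum_coeff, sum_congr rfl fun r _ => hterm r, ← sum_filter]
  congr 1
  ext r
  simp only [mem_filter, mem_range]
  omega

def risingSum (N : ℕ) (p : R[X]) (e f : R) : R :=
  ∑ r ∈ range (N + 1), p.coeff r * rf e r * rf (-f) (N - r)

lemma neg_one_pow_sub {r N : ℕ} (hr : r ≤ N) : (-1 : R) ^ (N - r) = (-1) ^ N * (-1) ^ r := by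
  rw [← pow_sub_mul_pow (-1 : R) hr, mul_assoc, ← pow_add, Even.neg_one_pow ⟨r, rfl⟩, mul_one]

lemma rf_mul_rf_neg_reflect (N : ℕ) {r : ℕ} (hr : r ≤ N) (e f : R) :
    rf e r * rf (-(e + N - 1 - f)) (N - r) = (-1) ^ (N - r) *
      ∑ s ∈ range (N + 1 - r), ((N - r).choose s : R) * rf e (r + s) * rf (-f) (N - (r + s)) := by
  rw [rf_neg, show e + N - 1 - f - ((N - r : ℕ) : R) + 1 = (e + r) + -f by
      push_cast [Nat.cast_sub hr]; ring,
    rf_add_eq_sum_choose, show N - r + 1 = N + 1 - r by omega, mul_sum, mul_sum, mul_sum]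
  refine sum_congr rfl fun s _ => ?_
  rw [rf_add, Nat.sub_sub]
  ring

theorem risingSum_reflect (N : ℕ) (p : R[X]) (e f : R) :
    risingSum N p e (e + N - 1 - f) = (-1) ^ N * risingSum N (twist N p) e f := by
  set G : ℕ → ℕ → R := fun r m =>
    p.coeff r * (-1) ^ (N - r) * ((N - r).choose (m - r) : R) * rf e m * rf (-f) (N - m)
  calc risingSum N p e (e + N - 1 - f)
      = ∑ r ∈ range (N + 1), ∑ s ∈ range (N + 1 - r), G r (r + s) := by
        refine sum_congr rfl fun r hr => ?_
        rw [mul_assoc, rf_mul_rf_neg_reflect N (by simp at hr; omega), mul_sum, mul_sum]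
        refine sum_congr rfl fun s _ => ?_
        simp only [G, Nat.add_sub_cancel_left]
        ring
    _ = ∑ m ∈ range (N + 1), ∑ r ∈ range (m + 1), G r m := by
        rw [← sum_range_diag_flip]
        refine sum_congr rfl fun m _ => sum_congr rfl fun r hr => ?_
        rw [Nat.add_sub_cancel' (by simp at hr; omega)]
    _ = (-1) ^ N * risingSum N (twist N p) e f := by
        rw [risingSum, mul_sum]
        refine sum_congr rfl fun m hm => ?_
        rw [coeff_twist (by simp at hm; omega), sum_mul, sum_mul, mul_sum]
        refine sum_congr rfl fun r hr => ?_
        simp only [G]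
        rw [neg_one_pow_sub (by simp at hm hr; omega)]
        ring

end

lemma twist_APoly {l : ℕ} (hl : 0 < l) : twist (2 * l + 1) (APoly l) = APoly l := by
  obtain ⟨k, rfl⟩ : ∃ k, l = k + 1 := ⟨l - 1, by omega⟩
  have hQ : (X ^ 2 + X + 1 : ℚ[X]).natDegree ≤ 2 := by compute_degree
  have h₁ : (2 * X + 1 : ℚ[X]).natDegree ≤ 1 := by compute_degree
  have h₂ : (X + 2 : ℚ[X]).natDegree ≤ 1 := by compute_degree
  have h₃ : (X - 1 : ℚ[X]).natDegree ≤ 1 := by compute_degree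
  have hQ₁ := (natDegree_mul_le).trans (add_le_add (natDegree_pow_le_of_le k hQ) h₁)
  have hQ₁₂ := (natDegree_mul_le).trans (add_le_add hQ₁ h₂)
  have tQ : twist 2 (X ^ 2 + X + 1 : ℚ[X]) = X ^ 2 + X + 1 := by
    simp [twist_eq_sum, sum_range_succ, coeff_X, coeff_one]
    ring
  have t₁ : twist 1 (2 * X + 1 : ℚ[X]) = 1 - X := by
    simp [twist_eq_sum, sum_range_succ, coeff_X, coeff_one, C_ofNat]
    ring
  have t₂ : twist 1 (X + 2 : ℚ[X]) = X + 2 := by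
    simp [twist_eq_sum, sum_range_succ, coeff_X, C_ofNat]
    ring
  have t₃ : twist 1 (X - 1 : ℚ[X]) = -(2 * X + 1) := by
    simp [twist_eq_sum, sum_range_succ, coeff_X, coeff_one]
    ring
  rw [APoly, Nat.add_sub_cancel, show 2 * (k + 1) + 1 = k * 2 + 1 + 1 + 1 by ring,
    twist_mul hQ₁₂ h₃, twist_mul hQ₁ h₂, twist_mul (natDegree_pow_le_of_le k hQ) h₁,
    twist_pow hQ, tQ, t₁, t₂, t₃]
  ring

theorem stmt6 (l : ℕ) (hl : 0 < l) (e f : ℚ) :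
    PP l e (e + 2 * l - f) = -PP l e f := by
  have hPP : ∀ g : ℚ, PP l e g = risingSum (2 * l + 1) (APoly l) e g := fun g => by
    simp [PP, risingSum]
  have hg : e + 2 * l - f = e + ((2 * l + 1 : ℕ) : ℚ) - 1 - f := by
    push_cast
    ring
  rw [hPP, hPP, hg, risingSum_reflect, twist_APoly hl, Odd.neg_one_pow ⟨l, rfl⟩, neg_one_mul]
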